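/- For any v, w in the cone E⁺ ⊂ sl(2,R) with q(v) > 0, the commutator satisfies ‖[v,w]‖ ≤ 2·√(κ(v,w)² − q(v)q(w)) · ‖v‖²/q(v), where ‖·‖ is the euclidean norm on the {x,y,z} coordinates. -/
import Mathlib


/-- The element {x,y,z} of sl(2,ℝ) realized as the matrix (x, y+z; y-z, -x). -/
def mk2 (x y z : ℝ) : Matrix (Fin 2) (Fin 2) ℝ := !![x, y + z; y - z, -x]

/-- The euclidean norm of a trace-free matrix in its {x,y,z} coordinates. -/
noncomputable def cnorm (M : Matrix (Fin 2) (Fin 2) ℝ) : ℝ :=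
  Real.sqrt ((M 0 0) ^ 2 + ((M 0 1 + M 1 0) / 2) ^ 2 + ((M 0 1 - M 1 0) / 2) ^ 2)

/-- For v, w in the cone E⁺ ⊂ sl(2,ℝ) with q(v) > 0,
‖[v,w]‖ ≤ 2·√(κ(v,w)² − q(v)q(w))·‖v‖²/q(v). -/
theorem stmt8 (x₁ y₁ z₁ x₂ y₂ z₂ : ℝ)
    (h₁ : Real.sqrt (x₁ ^ 2 + y₁ ^ 2) ≤ z₁)
    (h₂ : Real.sqrt (x₂ ^ 2 + y₂ ^ 2) ≤ z₂)
    (hq : 0 < -x₁ ^ 2 - y₁ ^ 2 + z₁ ^ 2) :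
    cnorm (mk2 x₁ y₁ z₁ * mk2 x₂ y₂ z₂ - mk2 x₂ y₂ z₂ * mk2 x₁ y₁ z₁) ≤
      2 * Real.sqrt ((-(x₁ * x₂) - y₁ * y₂ + z₁ * z₂) ^ 2 -
          (-x₁ ^ 2 - y₁ ^ 2 + z₁ ^ 2) * (-x₂ ^ 2 - y₂ ^ 2 + z₂ ^ 2)) *
        ((x₁ ^ 2 + y₁ ^ 2 + z₁ ^ 2) / (-x₁ ^ 2 - y₁ ^ 2 + z₁ ^ 2)) := by
  -- abbreviations
  set Q : ℝ := -x₁ ^ 2 - y₁ ^ 2 + z₁ ^ 2 with hQdef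
  set N : ℝ := x₁ ^ 2 + y₁ ^ 2 + z₁ ^ 2 with hNdef
  set D : ℝ := (-(x₁ * x₂) - y₁ * y₂ + z₁ * z₂) ^ 2 -
      Q * (-x₂ ^ 2 - y₂ ^ 2 + z₂ ^ 2) with hDdef
  have hN : 0 < N := by nlinarith [sq_nonneg x₁, sq_nonneg y₁]
  -- the key polynomial identity (with U = Q·w − κ·v):
  have hkey : D * Q * N ^ 2 =
      2 * N * (x₁ * (Q * y₂ - (-(x₁ * x₂) - y₁ * y₂ + z₁ * z₂) * y₁)
             - y₁ * (Q * x₂ - (-(x₁ * x₂) - y₁ * y₂ + z₁ * z₂) * x₁)) ^ 2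
    + 4 * Q * (x₁ * (Q * x₂ - (-(x₁ * x₂) - y₁ * y₂ + z₁ * z₂) * x₁)
             + y₁ * (Q * y₂ - (-(x₁ * x₂) - y₁ * y₂ + z₁ * z₂) * y₁)) ^ 2
    + Q ^ 3 * ((y₁ * z₂ - z₁ * y₂) ^ 2 + (z₁ * x₂ - x₁ * z₂) ^ 2
             + (x₁ * y₂ - y₁ * x₂) ^ 2) := by
    rw [hDdef, hQdef, hNdef]; ring
  have hkey' : 0 ≤ D * (Q * N ^ 2) := by
    have : 0 ≤ D * Q * N ^ 2 := by rw [hkey]; positivity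
    linarith [this, mul_assoc D Q (N ^ 2)]
  have hQN : 0 < Q * N ^ 2 := by positivity
  have hD : 0 ≤ D := (mul_nonneg_iff_of_pos_right hQN).mp hkey'
  -- compute the commutator
  have hM : mk2 x₁ y₁ z₁ * mk2 x₂ y₂ z₂ - mk2 x₂ y₂ z₂ * mk2 x₁ y₁ z₁ =
      mk2 (2 * (z₁ * y₂ - y₁ * z₂)) (2 * (x₁ * z₂ - x₂ * z₁))
        (2 * (x₁ * y₂ - x₂ * y₁)) := by
    ext i j
    fin_cases i <;> fin_cases j <;>
      simp [mk2, Matrix.mul_apply, Fin.sum_univ_two] <;> ring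
  have hcn : ∀ a b c : ℝ, cnorm (mk2 a b c) = Real.sqrt (a ^ 2 + b ^ 2 + c ^ 2) := by
    intro a b c
    unfold cnorm mk2
    norm_num
  rw [hM, hcn]
  rw [Real.sqrt_le_iff]
  constructor
  · positivity
  · have hsq : (2 * Real.sqrt D * (N / Q)) ^ 2 = 4 * D * N ^ 2 / Q ^ 2 := by
      rw [mul_pow, mul_pow, Real.sq_sqrt hD, div_pow]; ring
    rw [hsq, le_div_iff₀ (by positivity)]
    have hE : 0 ≤ (4 * D * N ^ 2 -
        ((2 * (z₁ * y₂ - y₁ * z₂)) ^ 2 + (2 * (x₁ * z₂ - x₂ * z₁)) ^ 2 +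
          (2 * (x₁ * y₂ - x₂ * y₁)) ^ 2) * Q ^ 2) * Q := by
      have hid : (4 * D * N ^ 2 -
          ((2 * (z₁ * y₂ - y₁ * z₂)) ^ 2 + (2 * (x₁ * z₂ - x₂ * z₁)) ^ 2 +
            (2 * (x₁ * y₂ - x₂ * y₁)) ^ 2) * Q ^ 2) * Q =
          8 * N * (x₁ * (Q * y₂ - (-(x₁ * x₂) - y₁ * y₂ + z₁ * z₂) * y₁)
             - y₁ * (Q * x₂ - (-(x₁ * x₂) - y₁ * y₂ + z₁ * z₂) * x₁)) ^ 2
        + 16 * Q * (x₁ * (Q * x₂ - (-(x₁ * x₂) - y₁ * y₂ + z₁ * z₂) * x₁)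
             + y₁ * (Q * y₂ - (-(x₁ * x₂) - y₁ * y₂ + z₁ * z₂) * y₁)) ^ 2 := by
        rw [hDdef, hQdef, hNdef]; ring
      rw [hid]; positivity
    have := (mul_nonneg_iff_of_pos_right hq).mp hE
    linarith
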